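/- arXiv:math/0510040 — 3 statements merged into one kernel-verified Lean document; each statement's English description precedes it below -/
import Mathlib

section
/- Let C be a strict monoidal category and T a strong twine on C, i.e. a natural isomorphism T_{U,V}: U⊗V → U⊗V with T_{I,I} = id_I, (T_{U,V}⊗id_W)T_{U⊗V,W} = (id_U⊗T_{V,W})T_{U,V⊗W}, and (T_{U,V}⊗id_W)(id_U⊗T_{V,W}) = (id_U⊗T_{V,W})(T_{U,V}⊗id_W). Then T satisfies (T_{U,V}⊗id_{W⊗X})(id_U⊗T_{V⊗W,X}) = (id_U⊗T_{V⊗W,X})(T_{U,V}⊗id_{W⊗X}) for all objects U,V,W,X. -/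
open CategoryTheory MonoidalCategory

universe v u

/-- A monoidal category is strict when the associators and unitors are `eqToHom`s of
equalities of objects. -/
structure MonStrict (C : Type u) [Category.{v} C] [MonoidalCategory C] : Prop where
  assocObj : ∀ X Y Z : C, (X ⊗ Y) ⊗ Z = X ⊗ (Y ⊗ Z)
  lidObj : ∀ X : C, 𝟙_ C ⊗ X = X
  ridObj : ∀ X : C, X ⊗ 𝟙_ C = X
  assocHom : ∀ X Y Z : C, (α_ X Y Z).hom = eqToHom (assocObj X Y Z)
  lidHom : ∀ X : C, (λ_ X).hom = eqToHom (lidObj X)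
  ridHom : ∀ X : C, (ρ_ X).hom = eqToHom (ridObj X)

variable {C : Type u} [Category.{v} C] [MonoidalCategory C]

/-- Transport of an endomorphism along an equality of objects of a strict monoidal
category. -/
def cE {X Y : C} (h : X = Y) (f : Y ⟶ Y) : X ⟶ X := eqToHom h ≫ f ≫ eqToHom h.symm

/-- A pure-braided structure on a strict monoidal category: two families of natural
isomorphisms `A, B : U ⊗ V ⊗ W ≅ U ⊗ V ⊗ W` satisfying the pure-braided axioms. -/
structure PureBraided (C : Type u) [Category.{v} C] [MonoidalCategory C]
    (hS : MonStrict C) where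
  A : ∀ U V W : C, U ⊗ (V ⊗ W) ≅ U ⊗ (V ⊗ W)
  B : ∀ U V W : C, U ⊗ (V ⊗ W) ≅ U ⊗ (V ⊗ W)
  natA : ∀ {U V W U' V' W' : C} (f : U ⟶ U') (g : V ⟶ V') (h : W ⟶ W'),
    (f ⊗ₘ (g ⊗ₘ h)) ≫ (A U' V' W').hom = (A U V W).hom ≫ (f ⊗ₘ (g ⊗ₘ h))
  natB : ∀ {U V W U' V' W' : C} (f : U ⟶ U') (g : V ⟶ V') (h : W ⟶ W'),
    (f ⊗ₘ (g ⊗ₘ h)) ≫ (B U' V' W').hom = (B U V W).hom ≫ (f ⊗ₘ (g ⊗ₘ h))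
  /-- `A_{U⊗V,W,X} = A_{U,V⊗W,X}(id_U ⊗ A_{V,W,X})` -/
  a1 : ∀ U V W X : C, (A (U ⊗ V) W X).hom =
    cE (by simp [hS.assocObj]) ((𝟙 U ⊗ₘ (A V W X).hom) ≫
      cE (by simp [hS.assocObj]) (A U (V ⊗ W) X).hom)
  /-- `A_{U,V,W⊗X} = (A_{U,V,W} ⊗ id_X) A_{U,V⊗W,X}` -/
  a2 : ∀ U V W X : C, (A U V (W ⊗ X)).hom =
    cE (by simp [hS.assocObj]) ((cE (by simp [hS.assocObj]) (A U (V ⊗ W) X).hom) ≫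
      ((A U V W).hom ⊗ₘ 𝟙 X))
  /-- `B_{U⊗V,W,X} = (id_U ⊗ B_{V,W,X}) B_{U,V⊗W,X}` -/
  baba : ∀ U V W X : C, (B (U ⊗ V) W X).hom =
    cE (by simp [hS.assocObj]) ((cE (by simp [hS.assocObj]) (B U (V ⊗ W) X).hom) ≫
      (𝟙 U ⊗ₘ (B V W X).hom))
  /-- `B_{U,V,W⊗X} = B_{U,V⊗W,X}(B_{U,V,W} ⊗ id_X)` -/
  b2 : ∀ U V W X : C, (B U V (W ⊗ X)).hom =
    cE (by simp [hS.assocObj]) (((B U V W).hom ⊗ₘ 𝟙 X) ≫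
      cE (by simp [hS.assocObj]) (B U (V ⊗ W) X).hom)
  /-- `(A_{U,V,W} ⊗ id_X)(id_U ⊗ B_{V,W,X}) = (id_U ⊗ B_{V,W,X})(A_{U,V,W} ⊗ id_X)` -/
  cab : ∀ U V W X : C,
    cE (by simp [hS.assocObj]) (𝟙 U ⊗ₘ (B V W X).hom) ≫ ((A U V W).hom ⊗ₘ 𝟙 X)
    = ((A U V W).hom ⊗ₘ 𝟙 X) ≫ cE (by simp [hS.assocObj]) (𝟙 U ⊗ₘ (B V W X).hom)
  /-- `A_{U,I,V} = B_{U,I,V}` -/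
  t1t : ∀ U V : C, A U (𝟙_ C) V = B U (𝟙_ C) V

/-- A twine on a strict monoidal category. -/
structure Twine (C : Type u) [Category.{v} C] [MonoidalCategory C]
    (hS : MonStrict C) where
  D : ∀ X Y : C, X ⊗ Y ≅ X ⊗ Y
  nat : ∀ {X Y X' Y' : C} (f : X ⟶ X') (g : Y ⟶ Y'),
    (f ⊗ₘ g) ≫ (D X' Y').hom = (D X Y).hom ≫ (f ⊗ₘ g)
  unit : (D (𝟙_ C) (𝟙_ C)).hom = 𝟙 (𝟙_ C ⊗ 𝟙_ C)
  /-- `(D_{X,Y} ⊗ id_Z) D_{X⊗Y,Z} = (id_X ⊗ D_{Y,Z}) D_{X,Y⊗Z}` -/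
  fus : ∀ X Y Z : C, (D (X ⊗ Y) Z).hom ≫ ((D X Y).hom ⊗ₘ 𝟙 Z)
    = cE (by simp [hS.assocObj]) ((D X (Y ⊗ Z)).hom ≫ (𝟙 X ⊗ₘ (D Y Z).hom))
  /-- the entwining axiom -/
  ent : ∀ X Y Z T : C,
    cE (by simp [hS.assocObj]) (𝟙 X ⊗ₘ (D Y (Z ⊗ T)).hom) ≫
      cE (by simp [hS.assocObj]) (𝟙 X ⊗ₘ ((D Y Z).inv ⊗ₘ 𝟙 T)) ≫
        ((D (X ⊗ Y) Z).hom ⊗ₘ 𝟙 T)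
    = ((D (X ⊗ Y) Z).hom ⊗ₘ 𝟙 T) ≫
        cE (by simp [hS.assocObj]) (𝟙 X ⊗ₘ ((D Y Z).inv ⊗ₘ 𝟙 T)) ≫
          cE (by simp [hS.assocObj]) (𝟙 X ⊗ₘ (D Y (Z ⊗ T)).hom)

/-- A strong twine on a strict monoidal category. -/
structure StrongTwine (C : Type u) [Category.{v} C] [MonoidalCategory C]
    (hS : MonStrict C) where
  D : ∀ X Y : C, X ⊗ Y ≅ X ⊗ Y
  nat : ∀ {X Y X' Y' : C} (f : X ⟶ X') (g : Y ⟶ Y'),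
    (f ⊗ₘ g) ≫ (D X' Y').hom = (D X Y).hom ≫ (f ⊗ₘ g)
  unit : (D (𝟙_ C) (𝟙_ C)).hom = 𝟙 (𝟙_ C ⊗ 𝟙_ C)
  /-- `(T_{U,V} ⊗ id_W) T_{U⊗V,W} = (id_U ⊗ T_{V,W}) T_{U,V⊗W}` -/
  fus : ∀ X Y Z : C, (D (X ⊗ Y) Z).hom ≫ ((D X Y).hom ⊗ₘ 𝟙 Z)
    = cE (by simp [hS.assocObj]) ((D X (Y ⊗ Z)).hom ≫ (𝟙 X ⊗ₘ (D Y Z).hom))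
  /-- `(T_{U,V} ⊗ id_W)(id_U ⊗ T_{V,W}) = (id_U ⊗ T_{V,W})(T_{U,V} ⊗ id_W)` -/
  comm : ∀ X Y Z : C,
    cE (by simp [hS.assocObj]) (𝟙 X ⊗ₘ (D Y Z).hom) ≫ ((D X Y).hom ⊗ₘ 𝟙 Z)
    = ((D X Y).hom ⊗ₘ 𝟙 Z) ≫ cE (by simp [hS.assocObj]) (𝟙 X ⊗ₘ (D Y Z).hom)

/-- A D-structure (consisting of isomorphisms) on a strict monoidal category. -/
structure DStructure (C : Type u) [Category.{v} C] [MonoidalCategory C]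
    (hS : MonStrict C) where
  R : ∀ X : C, X ≅ X
  nat : ∀ {X Y : C} (f : X ⟶ Y), f ≫ (R Y).hom = (R X).hom ≫ f
  unit : (R (𝟙_ C)).hom = 𝟙 (𝟙_ C)
  /-- `(R_{X⊗Y} ⊗ id_Z)(id_X ⊗ R_{Y⊗Z}) = (id_X ⊗ R_{Y⊗Z})(R_{X⊗Y} ⊗ id_Z)` -/
  comm : ∀ X Y Z : C,
    cE (by simp [hS.assocObj]) (𝟙 X ⊗ₘ (R (Y ⊗ Z)).hom) ≫ ((R (X ⊗ Y)).hom ⊗ₘ 𝟙 Z)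
    = ((R (X ⊗ Y)).hom ⊗ₘ 𝟙 Z) ≫ cE (by simp [hS.assocObj]) (𝟙 X ⊗ₘ (R (Y ⊗ Z)).hom)

/-!
The fusion axiom for `(V ⊗ W, X)` writes `T_{V⊗W,X} (T_{V,W} ⊗ id_X)` as `T_{V,W⊗X} (id_V ⊗ T_{W,X})`.
After tensoring with `id_U`, both factors on the right commute with `T_{U,V} ⊗ id_{W⊗X}`: the first
by the commutation axiom for `(U, V, W ⊗ X)`, the second because it acts on disjoint tensor factors.
The factor `id_U ⊗ T_{V,W} ⊗ id_X` also commutes with it (commutation axiom for `(U, V, W)`), and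
being invertible it can be cancelled.
-/

section

omit [MonoidalCategory C]

variable {X Y Z : C}

theorem commute_of_comp_commute_of_mono {m n t : X ⟶ X} [Mono n]
    (hn : n ≫ t = t ≫ n) (hmn : (m ≫ n) ≫ t = t ≫ m ≫ n) : m ≫ t = t ≫ m := by
  rw [← cancel_mono n, Category.assoc, Category.assoc, ← hn]
  simpa only [Category.assoc] using hmn

theorem cE_comp (h : X = Y) (f g : Y ⟶ Y) : cE h (f ≫ g) = cE h f ≫ cE h g := by
  simp [cE]

theorem cE_cE (h : X = Y) (h' : Y = Z) (f : Z ⟶ Z) : cE h (cE h' f) = cE (h.trans h') f := by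
  subst h'; simp [cE]

theorem cE_commute (h : X = Y) {f g : Y ⟶ Y} (hfg : f ≫ g = g ≫ f) :
    cE h f ≫ cE h g = cE h g ≫ cE h f := by
  rw [← cE_comp, hfg, cE_comp]

instance isIso_cE (h : X = Y) (f : Y ⟶ Y) [IsIso f] : IsIso (cE h f) := by
  unfold cE; infer_instance

end

section Tensor

variable {X Y Z : C}

theorem id_tensorHom_cE (U : C) (h : X = Y) (f : Y ⟶ Y) :
    𝟙 U ⊗ₘ cE h f = cE (congrArg (U ⊗ ·) h) (𝟙 U ⊗ₘ f) := by
  subst h; simp [cE]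

theorem cE_tensorHom_id (h : X = Y) (Z : C) (f : Y ⟶ Y) :
    cE h f ⊗ₘ 𝟙 Z = cE (congrArg (· ⊗ Z) h) (f ⊗ₘ 𝟙 Z) := by
  subst h; simp [cE]

theorem MonStrict.cE_tensorHom_tensorHom (hS : MonStrict C) (h : (X ⊗ Y) ⊗ Z = X ⊗ (Y ⊗ Z))
    (f : X ⟶ X) (g : Y ⟶ Y) (k : Z ⟶ Z) : cE h (f ⊗ₘ (g ⊗ₘ k)) = (f ⊗ₘ g) ⊗ₘ k := by
  have hα := associator_naturality f g k
  rw [hS.assocHom] at hα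
  rw [cE, ← Category.assoc, ← hα]
  simp

theorem MonStrict.cE_symm_tensorHom_tensorHom (hS : MonStrict C)
    (h : X ⊗ (Y ⊗ Z) = (X ⊗ Y) ⊗ Z) (f : X ⟶ X) (g : Y ⟶ Y) (k : Z ⟶ Z) :
    cE h ((f ⊗ₘ g) ⊗ₘ k) = f ⊗ₘ (g ⊗ₘ k) := by
  rw [← hS.cE_tensorHom_tensorHom h.symm, cE_cE]
  simp [cE]

end Tensor

namespace StrongTwine

variable {hS : MonStrict C} (T : StrongTwine C hS) (U V W X : C)

theorem id_tensorHom_fus (h : (U ⊗ V) ⊗ (W ⊗ X) = U ⊗ ((V ⊗ W) ⊗ X))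
    (k : (U ⊗ V) ⊗ (W ⊗ X) = U ⊗ (V ⊗ (W ⊗ X))) :
    cE h (𝟙 U ⊗ₘ (T.D (V ⊗ W) X).hom) ≫ cE h (𝟙 U ⊗ₘ ((T.D V W).hom ⊗ₘ 𝟙 X)) =
      cE k (𝟙 U ⊗ₘ (T.D V (W ⊗ X)).hom) ≫ (𝟙 (U ⊗ V) ⊗ₘ (T.D W X).hom) := by
  have hfus := congrArg (fun f => cE h (𝟙 U ⊗ₘ f)) (T.fus V W X)
  simp only [id_tensor_comp, cE_comp, id_tensorHom_cE, cE_cE] at hfus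
  rw [hfus, hS.cE_tensorHom_tensorHom, id_tensorHom_id]

theorem id_tensorHom_tensorHom_id_commute (h : (U ⊗ V) ⊗ (W ⊗ X) = U ⊗ ((V ⊗ W) ⊗ X)) :
    cE h (𝟙 U ⊗ₘ ((T.D V W).hom ⊗ₘ 𝟙 X)) ≫ ((T.D U V).hom ⊗ₘ 𝟙 (W ⊗ X)) =
      ((T.D U V).hom ⊗ₘ 𝟙 (W ⊗ X)) ≫ cE h (𝟙 U ⊗ₘ ((T.D V W).hom ⊗ₘ 𝟙 X)) := by
  have n : (U ⊗ V) ⊗ (W ⊗ X) = ((U ⊗ V) ⊗ W) ⊗ X := (hS.assocObj (U ⊗ V) W X).symm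
  have hT : (T.D U V).hom ⊗ₘ 𝟙 (W ⊗ X) = cE n (((T.D U V).hom ⊗ₘ 𝟙 W) ⊗ₘ 𝟙 X) := by
    rw [hS.cE_symm_tensorHom_tensorHom, id_tensorHom_id]
  have hTVW : cE h (𝟙 U ⊗ₘ ((T.D V W).hom ⊗ₘ 𝟙 X)) =
      cE n (cE (hS.assocObj U V W) (𝟙 U ⊗ₘ (T.D V W).hom) ⊗ₘ 𝟙 X) := by
    rw [cE_tensorHom_id, cE_cE, ← hS.cE_tensorHom_tensorHom (hS.assocObj U (V ⊗ W) X), cE_cE]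
  rw [hT, hTVW]
  refine cE_commute n ?_
  rw [← comp_tensor_id, T.comm U V W, comp_tensor_id]

end StrongTwine

/-- For a strong twine `T`, one has
`(T_{U,V} ⊗ id_{W⊗X})(id_U ⊗ T_{V⊗W,X}) = (id_U ⊗ T_{V⊗W,X})(T_{U,V} ⊗ id_{W⊗X})`. -/
theorem stmt13 (hS : MonStrict C) (T : StrongTwine C hS) (U V W X : C) :
    cE (by simp [hS.assocObj]) (𝟙 U ⊗ₘ (T.D (V ⊗ W) X).hom) ≫
      ((T.D U V).hom ⊗ₘ 𝟙 (W ⊗ X))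
    = ((T.D U V).hom ⊗ₘ 𝟙 (W ⊗ X)) ≫
        cE (by simp [hS.assocObj]) (𝟙 U ⊗ₘ (T.D (V ⊗ W) X).hom) := by
  have h : (U ⊗ V) ⊗ (W ⊗ X) = U ⊗ ((V ⊗ W) ⊗ X) := by simp [hS.assocObj]
  have k : (U ⊗ V) ⊗ (W ⊗ X) = U ⊗ (V ⊗ (W ⊗ X)) := by simp [hS.assocObj]
  refine commute_of_comp_commute_of_mono (T.id_tensorHom_tensorHom_id_commute U V W X h) ?_
  have hdisjoint : (𝟙 (U ⊗ V) ⊗ₘ (T.D W X).hom) ≫ ((T.D U V).hom ⊗ₘ 𝟙 (W ⊗ X)) =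
      ((T.D U V).hom ⊗ₘ 𝟙 (W ⊗ X)) ≫ (𝟙 (U ⊗ V) ⊗ₘ (T.D W X).hom) := by
    simp only [id_tensorHom, tensorHom_id, whisker_exchange]
  rw [T.id_tensorHom_fus U V W X h k, Category.assoc, hdisjoint,
    reassoc_of% (T.comm U V (W ⊗ X))]
end

section
/- Let H be a Hopf algebra and γ ∈ Reg¹(H) satisfying γ(ab₁)b₂ = γ(ab₂)b₁ for all a,b ∈ H. Then γ is lazy (γ(h₁)h₂ = h₁γ(h₂)) and neat (γ(ab₁)γ(b₂c) = γ(b₁c)γ(ab₂) for all a,b,c ∈ H). -/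
open TensorProduct

noncomputable section

universe u

section Defs

variable {k : Type u} [CommRing k] {H : Type u} [Ring H] [Bialgebra k H]

/-- Convolution product on the dual of a coalgebra. -/
def conv {C : Type u} [AddCommGroup C] [Module k C] [Coalgebra k C]
    (f g : C →ₗ[k] k) : C →ₗ[k] k :=
  LinearMap.mul' k k ∘ₗ TensorProduct.map f g ∘ₗ Coalgebra.comul

/-- `a ⊗ b ↦ a · ε(b)`. -/
def pr1 : H ⊗[k] H →ₗ[k] H :=
  (TensorProduct.rid k H).toLinearMap ∘ₗ TensorProduct.map LinearMap.id Coalgebra.counit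

/-- `a ⊗ (b ⊗ c) ↦ ε(a) · (b ⊗ c)`. -/
def dropL3 : H ⊗[k] (H ⊗[k] H) →ₗ[k] H ⊗[k] H :=
  (TensorProduct.lid k (H ⊗[k] H)).toLinearMap ∘ₗ TensorProduct.map Coalgebra.counit LinearMap.id

/-- Multiplication of `H` as a linear map `H ⊗ H → H`. -/
def mulH : H ⊗[k] H →ₗ[k] H := LinearMap.mul' k H

/-- `σ` is normalized: `σ(1,h) = ε(h) = σ(h,1)`. -/
def Normalized (σ : H ⊗[k] H →ₗ[k] k) : Prop :=
  ∀ h : H, σ (1 ⊗ₜ[k] h) = Coalgebra.counit (R := k) h ∧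
    σ (h ⊗ₜ[k] 1) = Coalgebra.counit (R := k) h

/-- Left 2-cocycle condition: `σ(a₁,b₁)σ(a₂b₂,c) = σ(b₁,c₁)σ(a,b₂c₂)`, expressed as an
equality of linear functionals on `H ⊗ (H ⊗ H)` (convolution of the indicated factors). -/
def IsLeftCocycle (σ : H ⊗[k] H →ₗ[k] k) : Prop :=
  conv (σ ∘ₗ TensorProduct.map LinearMap.id pr1)
      (σ ∘ₗ TensorProduct.map mulH LinearMap.id ∘ₗ (TensorProduct.assoc k H H H).symm.toLinearMap)
  = conv (σ ∘ₗ dropL3) (σ ∘ₗ TensorProduct.map LinearMap.id mulH)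

/-- Right 2-cocycle condition: `σ(a₁b₁,c)σ(a₂,b₂) = σ(a,b₁c₁)σ(b₂,c₂)`. -/
def IsRightCocycle (σ : H ⊗[k] H →ₗ[k] k) : Prop :=
  conv (σ ∘ₗ TensorProduct.map mulH LinearMap.id ∘ₗ (TensorProduct.assoc k H H H).symm.toLinearMap)
      (σ ∘ₗ TensorProduct.map LinearMap.id pr1)
  = conv (σ ∘ₗ TensorProduct.map LinearMap.id mulH) (σ ∘ₗ dropL3)

/-- Laziness for `σ : H ⊗ H → k`: `σ(h₁,h'₁)h₂h'₂ = h₁h'₁σ(h₂,h'₂)`. -/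
def IsLazy2 (σ : H ⊗[k] H →ₗ[k] k) : Prop :=
  (TensorProduct.lid k H).toLinearMap ∘ₗ TensorProduct.map σ mulH ∘ₗ Coalgebra.comul
  = (TensorProduct.rid k H).toLinearMap ∘ₗ TensorProduct.map mulH σ ∘ₗ Coalgebra.comul

/-- Laziness for `γ : H → k`: `γ(h₁)h₂ = h₁γ(h₂)`. -/
def IsLazy1 (γ : H →ₗ[k] k) : Prop :=
  (TensorProduct.lid k H).toLinearMap ∘ₗ TensorProduct.map γ LinearMap.id ∘ₗ Coalgebra.comul
  = (TensorProduct.rid k H).toLinearMap ∘ₗ TensorProduct.map LinearMap.id γ ∘ₗ Coalgebra.comul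

/-- Neatness: `σ(a,b₁)σ(b₂,c) = σ(b₁,c)σ(a,b₂)`. -/
def Neat2 (σ : H ⊗[k] H →ₗ[k] k) : Prop :=
  conv (σ ∘ₗ TensorProduct.map LinearMap.id pr1) (σ ∘ₗ dropL3)
  = conv (σ ∘ₗ dropL3) (σ ∘ₗ TensorProduct.map LinearMap.id pr1)

/-- `a ⊗ (b ⊗ (c ⊗ d)) ↦ ε(a) (b ⊗ (c ⊗ d))`. -/
def dropL4 : H ⊗[k] (H ⊗[k] (H ⊗[k] H)) →ₗ[k] H ⊗[k] (H ⊗[k] H) :=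
  (TensorProduct.lid k (H ⊗[k] (H ⊗[k] H))).toLinearMap ∘ₗ
    TensorProduct.map Coalgebra.counit LinearMap.id

/-- `(a,b,c,d) ↦ σ(ab, c) ε(d)`. -/
def fPure (σ : H ⊗[k] H →ₗ[k] k) : H ⊗[k] (H ⊗[k] (H ⊗[k] H)) →ₗ[k] k :=
  σ ∘ₗ TensorProduct.map mulH LinearMap.id ∘ₗ (TensorProduct.assoc k H H H).symm.toLinearMap ∘ₗ
    TensorProduct.map LinearMap.id (TensorProduct.map LinearMap.id pr1)

/-- `(a,b,c,d) ↦ ε(a) τ(b, c) ε(d)`. -/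
def gPure (τ : H ⊗[k] H →ₗ[k] k) : H ⊗[k] (H ⊗[k] (H ⊗[k] H)) →ₗ[k] k :=
  τ ∘ₗ TensorProduct.map LinearMap.id pr1 ∘ₗ dropL4

/-- `(a,b,c,d) ↦ ε(a) σ(b, cd)`. -/
def hPure (σ : H ⊗[k] H →ₗ[k] k) : H ⊗[k] (H ⊗[k] (H ⊗[k] H)) →ₗ[k] k :=
  σ ∘ₗ TensorProduct.map LinearMap.id mulH ∘ₗ dropL4

/-- Purity for a map `σ` with convolution inverse `τ = σ⁻¹`:
`σ(ab₁,c₁)σ⁻¹(b₂,c₂)σ(b₃,c₃d) = σ(b₁,c₁d)σ⁻¹(b₂,c₂)σ(ab₃,c₃)`. -/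
def Pure2 (σ τ : H ⊗[k] H →ₗ[k] k) : Prop :=
  conv (C := H ⊗[k] (H ⊗[k] (H ⊗[k] H))) (conv (fPure σ) (gPure τ)) (hPure σ)
  = conv (C := H ⊗[k] (H ⊗[k] (H ⊗[k] H))) (conv (hPure σ) (gPure τ)) (fPure σ)

/-- `D¹(γ)(h,h') = γ(h₁)γ(h'₁)γinv(h₂h'₂)` where `γinv` is the convolution inverse of `γ`. -/
def D1 (γ γinv : H →ₗ[k] k) : H ⊗[k] H →ₗ[k] k :=
  conv (LinearMap.mul' k k ∘ₗ TensorProduct.map γ γ) (γinv ∘ₗ mulH)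

/-- The deformed product `h ·σ h' = σ(h₁,h'₁) h₂h'₂`. -/
def mulSig (σ : H ⊗[k] H →ₗ[k] k) : H ⊗[k] H →ₗ[k] H :=
  (TensorProduct.lid k H).toLinearMap ∘ₗ TensorProduct.map σ mulH ∘ₗ Coalgebra.comul

/-- Neatness for `γ : H → k`: `γ(ab₁)γ(b₂c) = γ(b₁c)γ(ab₂)`. -/
def Neat1 (γ : H →ₗ[k] k) : Prop :=
  conv (γ ∘ₗ mulH ∘ₗ TensorProduct.map LinearMap.id pr1) (γ ∘ₗ mulH ∘ₗ dropL3)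
  = conv (γ ∘ₗ mulH ∘ₗ dropL3) (γ ∘ₗ mulH ∘ₗ TensorProduct.map LinearMap.id pr1)

/-- `γ ∈ Reg¹(H)`: normalized and convolution invertible. -/
def Reg1 (γ : H →ₗ[k] k) : Prop :=
  γ 1 = 1 ∧ ∃ δ : H →ₗ[k] k, conv γ δ = (Coalgebra.counit : H →ₗ[k] k) ∧
    conv δ γ = (Coalgebra.counit : H →ₗ[k] k)

/-- `σ ∈ Reg²(H)`: normalized and convolution invertible. -/
def Reg2 (σ : H ⊗[k] H →ₗ[k] k) : Prop :=
  Normalized σ ∧ ∃ τ : H ⊗[k] H →ₗ[k] k,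
    conv σ τ = (Coalgebra.counit : H ⊗[k] H →ₗ[k] k) ∧
    conv τ σ = (Coalgebra.counit : H ⊗[k] H →ₗ[k] k)

/-- `a ⊗ b ↦ γ(a b₁) b₂`. -/
def stmt17L (γ : H →ₗ[k] k) : H ⊗[k] H →ₗ[k] H :=
  (TensorProduct.lid k H).toLinearMap ∘ₗ TensorProduct.map (γ ∘ₗ mulH) LinearMap.id ∘ₗ
    (TensorProduct.assoc k H H H).symm.toLinearMap ∘ₗ
      TensorProduct.map LinearMap.id Coalgebra.comul

/-- `a ⊗ b ↦ γ(a b₂) b₁`. -/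
def stmt17R (γ : H →ₗ[k] k) : H ⊗[k] H →ₗ[k] H :=
  (TensorProduct.lid k H).toLinearMap ∘ₗ TensorProduct.map (γ ∘ₗ mulH) LinearMap.id ∘ₗ
    (TensorProduct.assoc k H H H).symm.toLinearMap ∘ₗ
      TensorProduct.map LinearMap.id
        ((TensorProduct.comm k H H).toLinearMap ∘ₗ Coalgebra.comul)

end Defs

/-! Putting `a = 1` in `γ(ab₁)b₂ = γ(ab₂)b₁` is laziness. Applying `h ↦ γ(hc)` to the same
identity gives `γ(ab₁)γ(b₂c) = γ(ab₂)γ(b₁c)`, and by the counit axioms the two sides of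
neatness at `a ⊗ b ⊗ c` are exactly these two sums. -/

open Coalgebra

section Convolution

variable {k : Type u} [CommRing k] {C : Type u} [AddCommGroup C] [Module k C] [Coalgebra k C]

lemma apply_lid_map_comul (f g : C →ₗ[k] k) (x : C) :
    g (TensorProduct.lid k C (TensorProduct.map f LinearMap.id (comul x))) = conv f g x := by
  rw [conv, LinearMap.comp_apply, LinearMap.comp_apply]
  induction comul (R := k) x with
  | zero => simp
  | tmul y z => simp
  | add y z hy hz => simp only [map_add, hy, hz]

lemma apply_rid_map_comul (f g : C →ₗ[k] k) (x : C) :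
    f (TensorProduct.rid k C (TensorProduct.map LinearMap.id g (comul x))) = conv f g x := by
  rw [conv, LinearMap.comp_apply, LinearMap.comp_apply]
  induction comul (R := k) x with
  | zero => simp
  | tmul y z => simp [mul_comm]
  | add y z hy hz => simp only [map_add, hy, hz]

end Convolution

section Bialgebra

variable {k : Type u} [CommRing k] {H : Type u} [Ring H] [Bialgebra k H]

lemma stmt17L_tmul (γ : H →ₗ[k] k) (a b : H) :
    stmt17L γ (a ⊗ₜ b) = TensorProduct.lid k H
      (TensorProduct.map (γ ∘ₗ LinearMap.mulLeft k a) LinearMap.id (comul b)) := by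
  simp only [stmt17L, LinearMap.comp_apply, TensorProduct.map_tmul, LinearMap.id_apply]
  induction comul (R := k) b with
  | zero => simp
  | tmul y z => simp [mulH]
  | add y z hy hz => simp only [tmul_add, map_add, hy, hz]

lemma stmt17R_tmul (γ : H →ₗ[k] k) (a b : H) :
    stmt17R γ (a ⊗ₜ b) = TensorProduct.rid k H
      (TensorProduct.map LinearMap.id (γ ∘ₗ LinearMap.mulLeft k a) (comul b)) := by
  simp only [stmt17R, LinearMap.comp_apply, TensorProduct.map_tmul, LinearMap.id_apply]
  induction comul (R := k) b with
  | zero => simp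
  | tmul y z => simp [mulH]
  | add y z hy hz => simp only [tmul_add, map_add, hy, hz]

lemma conv_comp_pr1_comp_dropL3_tmul (φ ψ : H ⊗[k] H →ₗ[k] k) (a b c : H) :
    conv (φ ∘ₗ TensorProduct.map LinearMap.id pr1) (ψ ∘ₗ dropL3) (a ⊗ₜ (b ⊗ₜ c)) =
      conv (φ ∘ₗ TensorProduct.mk k H H a) (ψ ∘ₗ (TensorProduct.mk k H H).flip c) b := by
  -- `x, y, z` stand for `Δa, Δb, Δc`; the counit axioms contract the legs `a₂` and `c₁`.
  suffices ∀ x y z : H ⊗[k] H,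
      LinearMap.mul' k k (TensorProduct.map (φ ∘ₗ TensorProduct.map LinearMap.id pr1)
        (ψ ∘ₗ dropL3)
        (AlgebraTensorModule.tensorTensorTensorComm k k k k H H (H ⊗[k] H) (H ⊗[k] H)
          (x ⊗ₜ AlgebraTensorModule.tensorTensorTensorComm k k k k H H H H (y ⊗ₜ z)))) =
      LinearMap.mul' k k (TensorProduct.map
        (φ ∘ₗ TensorProduct.mk k H H (TensorProduct.rid k H (counit.lTensor H x)))
        (ψ ∘ₗ (TensorProduct.mk k H H).flip (TensorProduct.lid k H (counit.rTensor H z))) y) by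
    simpa [conv] using this (comul a) (comul b) (comul c)
  intro x y z
  induction x with
  | zero => simp
  | add x x' hx hx' =>
    simp only [add_tmul, map_add, hx, hx', LinearMap.comp_add, TensorProduct.map_add_left,
      LinearMap.add_apply]
  | tmul a₁ a₂ =>
  induction y with
  | zero => simp
  | add y y' hy hy' => simp only [tmul_add, add_tmul, map_add, hy, hy']
  | tmul b₁ b₂ =>
  induction z with
  | zero => simp
  | add z z' hz hz' =>
    simp only [tmul_add, map_add, hz, hz', LinearMap.comp_add, TensorProduct.map_add_right,
      LinearMap.add_apply]
  | tmul c₁ c₂ =>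
    simp only [pr1, dropL3, AlgebraTensorModule.tensorTensorTensorComm_tmul, map_tmul,
      LinearMap.coe_comp, Function.comp_apply, LinearMap.id_coe, id_eq, LinearEquiv.coe_coe,
      rid_tmul, lid_tmul, tmul_smul, map_smul, smul_eq_mul, LinearMap.mul'_apply,
      LinearMap.lTensor_tmul, LinearMap.rTensor_tmul, LinearMap.coe_smul, Pi.smul_apply,
      mk_apply, LinearMap.flip_apply]
    ring

lemma conv_comp_dropL3_comp_pr1_tmul (ψ φ : H ⊗[k] H →ₗ[k] k) (a b c : H) :
    conv (ψ ∘ₗ dropL3) (φ ∘ₗ TensorProduct.map LinearMap.id pr1) (a ⊗ₜ (b ⊗ₜ c)) =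
      conv (ψ ∘ₗ (TensorProduct.mk k H H).flip c) (φ ∘ₗ TensorProduct.mk k H H a) b := by
  suffices ∀ x y z : H ⊗[k] H,
      LinearMap.mul' k k (TensorProduct.map (ψ ∘ₗ dropL3)
        (φ ∘ₗ TensorProduct.map LinearMap.id pr1)
        (AlgebraTensorModule.tensorTensorTensorComm k k k k H H (H ⊗[k] H) (H ⊗[k] H)
          (x ⊗ₜ AlgebraTensorModule.tensorTensorTensorComm k k k k H H H H (y ⊗ₜ z)))) =
      LinearMap.mul' k k (TensorProduct.map
        (ψ ∘ₗ (TensorProduct.mk k H H).flip (TensorProduct.rid k H (counit.lTensor H z)))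
        (φ ∘ₗ TensorProduct.mk k H H (TensorProduct.lid k H (counit.rTensor H x))) y) by
    simpa [conv] using this (comul a) (comul b) (comul c)
  intro x y z
  induction x with
  | zero => simp
  | add x x' hx hx' =>
    simp only [add_tmul, map_add, hx, hx', LinearMap.comp_add, TensorProduct.map_add_right,
      LinearMap.add_apply]
  | tmul a₁ a₂ =>
  induction y with
  | zero => simp
  | add y y' hy hy' => simp only [tmul_add, add_tmul, map_add, hy, hy']
  | tmul b₁ b₂ =>
  induction z with
  | zero => simp
  | add z z' hz hz' =>
    simp only [tmul_add, map_add, hz, hz', LinearMap.comp_add, TensorProduct.map_add_left,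
      LinearMap.add_apply]
  | tmul c₁ c₂ =>
    simp only [pr1, dropL3, AlgebraTensorModule.tensorTensorTensorComm_tmul, map_tmul,
      LinearMap.coe_comp, Function.comp_apply, LinearMap.id_coe, id_eq, LinearEquiv.coe_coe,
      rid_tmul, lid_tmul, tmul_smul, map_smul, smul_eq_mul, LinearMap.mul'_apply,
      LinearMap.lTensor_tmul, LinearMap.rTensor_tmul, LinearMap.coe_smul, Pi.smul_apply,
      mk_apply, LinearMap.flip_apply]
    ring

lemma mulH_comp_mk (a : H) : mulH ∘ₗ TensorProduct.mk k H H a = LinearMap.mulLeft k a := by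
  ext; simp [mulH]

lemma mulH_comp_mk_flip (c : H) :
    mulH ∘ₗ (TensorProduct.mk k H H).flip c = LinearMap.mulRight k c := by
  ext; simp [mulH]

lemma neat1_lhs_tmul (γ : H →ₗ[k] k) (a b c : H) :
    conv (γ ∘ₗ mulH ∘ₗ TensorProduct.map LinearMap.id pr1) (γ ∘ₗ mulH ∘ₗ dropL3)
        (a ⊗ₜ (b ⊗ₜ c)) =
      conv (γ ∘ₗ LinearMap.mulLeft k a) (γ ∘ₗ LinearMap.mulRight k c) b := by
  simp only [← LinearMap.comp_assoc, conv_comp_pr1_comp_dropL3_tmul]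
  rw [LinearMap.comp_assoc, LinearMap.comp_assoc, mulH_comp_mk, mulH_comp_mk_flip]

lemma neat1_rhs_tmul (γ : H →ₗ[k] k) (a b c : H) :
    conv (γ ∘ₗ mulH ∘ₗ dropL3) (γ ∘ₗ mulH ∘ₗ TensorProduct.map LinearMap.id pr1)
        (a ⊗ₜ (b ⊗ₜ c)) =
      conv (γ ∘ₗ LinearMap.mulRight k c) (γ ∘ₗ LinearMap.mulLeft k a) b := by
  simp only [← LinearMap.comp_assoc, conv_comp_dropL3_comp_pr1_tmul]
  rw [LinearMap.comp_assoc, LinearMap.comp_assoc, mulH_comp_mk, mulH_comp_mk_flip]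

lemma neat1_iff (γ : H →ₗ[k] k) :
    Neat1 γ ↔ ∀ a b c : H,
      conv (γ ∘ₗ LinearMap.mulLeft k a) (γ ∘ₗ LinearMap.mulRight k c) b =
        conv (γ ∘ₗ LinearMap.mulRight k c) (γ ∘ₗ LinearMap.mulLeft k a) b := by
  refine ⟨fun h a b c => ?_, fun h => TensorProduct.ext_threefold' fun a b c => ?_⟩
  · rw [← neat1_lhs_tmul, ← neat1_rhs_tmul]
    exact LinearMap.congr_fun h _
  · rw [neat1_lhs_tmul, neat1_rhs_tmul, h]

variable {γ : H →ₗ[k] k}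

lemma isLazy1_of_stmt17L_eq (h : stmt17L γ = stmt17R γ) : IsLazy1 γ := by
  ext b
  simpa [stmt17L_tmul, stmt17R_tmul] using LinearMap.congr_fun h (1 ⊗ₜ b)

lemma conv_mulLeft_mulRight_comm_of_stmt17L_eq (h : stmt17L γ = stmt17R γ) (a b c : H) :
    conv (γ ∘ₗ LinearMap.mulLeft k a) (γ ∘ₗ LinearMap.mulRight k c) b =
      conv (γ ∘ₗ LinearMap.mulRight k c) (γ ∘ₗ LinearMap.mulLeft k a) b := by
  have h' := congrArg (γ ∘ₗ LinearMap.mulRight k c) (LinearMap.congr_fun h (a ⊗ₜ b))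
  rwa [stmt17L_tmul, stmt17R_tmul, apply_lid_map_comul, apply_rid_map_comul] at h'

end Bialgebra

theorem stmt17_general {k : Type u} [Field k] {H : Type u} [Ring H] [HopfAlgebra k H]
    (γ : H →ₗ[k] k)
    (hcond : stmt17L γ = stmt17R γ) :
    IsLazy1 γ ∧ Neat1 γ :=
  ⟨isLazy1_of_stmt17L_eq hcond, (neat1_iff γ).2 (conv_mulLeft_mulRight_comm_of_stmt17L_eq hcond)⟩

/-- If `γ ∈ Reg¹(H)` satisfies `γ(ab₁)b₂ = γ(ab₂)b₁` for all `a, b ∈ H`, then `γ` is lazy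
and neat. -/
theorem stmt17 {k : Type u} [Field k] {H : Type u} [Ring H] [HopfAlgebra k H]
    (γ γinv : H →ₗ[k] k) (hn : γ 1 = 1)
    (hinv1 : conv γ γinv = (Coalgebra.counit : H →ₗ[k] k))
    (hinv2 : conv γinv γ = (Coalgebra.counit : H →ₗ[k] k))
    (hcond : stmt17L γ = stmt17R γ) :
    IsLazy1 γ ∧ Neat1 γ :=
  stmt17_general γ hcond

end
end

section
/- Let H be a Hopf algebra and γ : H → k a normalized convolution-invertible lazy map that is neat, i.e. γ(ab₁)γ(b₂c) = γ(b₁c)γ(ab₂) for all a,b,c ∈ H. Then D¹(γ)(h,h') := γ(h₁)γ(h'₁)γ⁻¹(h₂h'₂) is a neat lazy 2-cocycle: it is a normalized convolution-invertible lazy left 2-cocycle satisfying D¹(γ)(a,b₁)D¹(γ)(b₂,c) = D¹(γ)(b₁,c)D¹(γ)(a,b₂) for all a,b,c ∈ H. -/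
open TensorProduct

noncomputable section

universe u

/-!
All computations take place in the convolution monoids `WithConv (C →ₗ[k] k)`, in which
precomposition with a coalgebra map is a monoid hom. On `H ⊗ H`,
`D¹(γ) = (γ ∘ fst) * (γ ∘ snd) * (γ⁻¹ ∘ mul)`. Laziness of `γ` makes `γ` central, and laziness
survives precomposition with the projections `fst` and `snd`. On `H ⊗ (H ⊗ H)` write `γ_x` for `γ`
composed with the coalgebra map `a ⊗ (b ⊗ c) ↦ x`: the cocycle and neatness conditions for `D¹(γ)`
become identities between the central elements `γ_a`, `γ_b`, `γ_c` and the units `γ_ab`, `γ_bc`,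
`γ_abc`, and neatness of `γ` says exactly that `γ_ab` and `γ_bc` commute. Laziness of `D¹(γ)`, an
identity between `H`-valued maps, is checked after applying every functional on `H`, which suffices
over a field.
-/

open TensorProduct WithConv
open scoped Coalgebra

section Convolution

variable {k : Type u} [CommRing k] {C D E : Type u}
  [AddCommGroup C] [Module k C] [Coalgebra k C] [AddCommGroup D] [Module k D] [Coalgebra k D]
  [AddCommGroup E] [Module k E] [Coalgebra k E]

lemma conv_eq_ofConv_mul (f g : C →ₗ[k] k) : conv f g = (toConv f * toConv g).ofConv :=
  rfl

lemma toConv_counit : toConv (Coalgebra.counit : C →ₗ[k] k) = 1 := by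
  ext; simp

lemma conv_eq_counit_iff {f g : C →ₗ[k] k} :
    conv f g = Coalgebra.counit ↔ toConv f * toConv g = 1 := by
  rw [← toConv_counit, ← toConv_injective.eq_iff]
  rfl

lemma isUnit_toConv_iff {σ : C →ₗ[k] k} :
    IsUnit (toConv σ) ↔ ∃ τ, conv σ τ = Coalgebra.counit ∧ conv τ σ = Coalgebra.counit := by
  simp only [isUnit_iff_exists, conv_eq_counit_iff, toConv_surjective.exists]

variable (k) in
def convPrecomp (φ : C →ₗc[k] D) : WithConv (D →ₗ[k] k) →* WithConv (C →ₗ[k] k) where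
  toFun f := toConv (f.ofConv ∘ₗ φ.toLinearMap)
  map_one' := by ext; simp
  map_mul' f g := WithConv.ext (LinearMap.convMul_comp_coalgHom_distrib f g φ)

lemma convPrecomp_toConv (φ : C →ₗc[k] D) (f : D →ₗ[k] k) :
    convPrecomp k φ (toConv f) = toConv (f ∘ₗ φ.toLinearMap) :=
  rfl

lemma convPrecomp_comp (φ : C →ₗc[k] D) (ψ : E →ₗc[k] C) (f : WithConv (D →ₗ[k] k)) :
    convPrecomp k ψ (convPrecomp k φ f) = convPrecomp k (φ.comp ψ) f :=
  rfl

end Convolution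

section Projections

variable (k C D : Type*) [CommRing k]
  [AddCommGroup C] [Module k C] [Coalgebra k C] [AddCommGroup D] [Module k D] [Coalgebra k D]

noncomputable def fstCoalgHom : C ⊗[k] D →ₗc[k] C :=
  (Coalgebra.TensorProduct.rid k k C).toCoalgHom.comp
    (Coalgebra.TensorProduct.map (CoalgHom.id k C) (Coalgebra.counitCoalgHom k D))

noncomputable def sndCoalgHom : C ⊗[k] D →ₗc[k] D :=
  (Coalgebra.TensorProduct.lid k D).toCoalgHom.comp
    (Coalgebra.TensorProduct.map (Coalgebra.counitCoalgHom k C) (CoalgHom.id k D))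

variable {k C D}

@[simp]
lemma fstCoalgHom_tmul (a : C) (b : D) :
    fstCoalgHom k C D (a ⊗ₜ b) = Coalgebra.counit (R := k) b • a :=
  rfl

@[simp]
lemma sndCoalgHom_tmul (a : C) (b : D) :
    sndCoalgHom k C D (a ⊗ₜ b) = Coalgebra.counit (R := k) a • b :=
  rfl

lemma fstCoalgHom_comp_map_id {E : Type*} [AddCommGroup E] [Module k E] [Coalgebra k E]
    (f : D →ₗc[k] E) :
    (fstCoalgHom k C E).comp (Coalgebra.TensorProduct.map (CoalgHom.id k C) f) =
      fstCoalgHom k C D :=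
  CoalgHom.coe_linearMap_injective (TensorProduct.ext' fun a b => by simp)

lemma sndCoalgHom_comp_map_id {E : Type*} [AddCommGroup E] [Module k E] [Coalgebra k E]
    (f : D →ₗc[k] E) :
    (sndCoalgHom k C E).comp (Coalgebra.TensorProduct.map (CoalgHom.id k C) f) =
      f.comp (sndCoalgHom k C D) :=
  CoalgHom.coe_linearMap_injective (TensorProduct.ext' fun a b => by simp)

lemma Coalgebra.Repr.sum_counit_right_smul {a : C} {ι : Type*} (𝓡 : Coalgebra.Repr k a ι) :
    ∑ i ∈ 𝓡.index, Coalgebra.counit (R := k) (𝓡.right i) • 𝓡.left i = a := by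
  simpa only [map_sum, rid_tmul, one_smul] using
    congr(_root_.TensorProduct.rid k C $(Coalgebra.sum_tmul_counit_eq 𝓡))

lemma mul'_comp_map_eq_convMul (σ : C →ₗ[k] k) (τ : D →ₗ[k] k) :
    LinearMap.mul' k k ∘ₗ map σ τ = (toConv (σ ∘ₗ (fstCoalgHom k C D).toLinearMap) *
      toConv (τ ∘ₗ (sndCoalgHom k C D).toLinearMap)).ofConv := by
  ext a b
  conv_lhs => rw [← Coalgebra.sum_counit_smul (ℛ k b), ← (ℛ k a).sum_counit_right_smul]
  simp [← (ℛ k a).eq, ← (ℛ k b).eq, sum_tmul, tmul_sum, Finset.mul_sum]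
  exact Finset.sum_congr rfl fun _ _ => Finset.sum_congr rfl fun _ _ => by ring

end Projections

section Lazy

variable {k : Type u} [CommRing k] {C D : Type u} {M : Type*}
  [AddCommGroup C] [Module k C] [Coalgebra k C] [AddCommGroup D] [Module k D] [Coalgebra k D]
  [AddCommGroup M] [Module k M]

def IsLazy (σ : C →ₗ[k] k) : Prop :=
  (TensorProduct.lid k C).toLinearMap ∘ₗ map σ LinearMap.id ∘ₗ Coalgebra.comul =
    (TensorProduct.rid k C).toLinearMap ∘ₗ map LinearMap.id σ ∘ₗ Coalgebra.comul

lemma comp_lid_map_comul (σ : C →ₗ[k] k) (μ : C →ₗ[k] M) (φ : M →ₗ[k] k) :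
    φ ∘ₗ (TensorProduct.lid k M).toLinearMap ∘ₗ map σ μ ∘ₗ Coalgebra.comul =
      (toConv σ * toConv (φ ∘ₗ μ)).ofConv := by
  have : (φ ∘ₗ (TensorProduct.lid k M).toLinearMap) ∘ₗ map σ μ =
      LinearMap.mul' k k ∘ₗ map σ (φ ∘ₗ μ) := by
    ext; simp
  rw [← LinearMap.comp_assoc, ← LinearMap.comp_assoc, this]
  rfl

lemma comp_rid_map_comul (σ : C →ₗ[k] k) (μ : C →ₗ[k] M) (φ : M →ₗ[k] k) :
    φ ∘ₗ (TensorProduct.rid k M).toLinearMap ∘ₗ map μ σ ∘ₗ Coalgebra.comul =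
      (toConv (φ ∘ₗ μ) * toConv σ).ofConv := by
  have : (φ ∘ₗ (TensorProduct.rid k M).toLinearMap) ∘ₗ map μ σ =
      LinearMap.mul' k k ∘ₗ map (φ ∘ₗ μ) σ := by
    ext; simp [mul_comm]
  rw [← LinearMap.comp_assoc, ← LinearMap.comp_assoc, this]
  rfl

lemma IsLazy.commute {σ : C →ₗ[k] k} (hσ : IsLazy σ) (g : WithConv (C →ₗ[k] k)) :
    Commute (toConv σ) g := by
  ext1
  have := congr(g.ofConv ∘ₗ $hσ)
  rwa [comp_lid_map_comul, comp_rid_map_comul, LinearMap.comp_id] at this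

lemma IsLazy.comp_fst {σ : C →ₗ[k] k} (hσ : IsLazy σ) :
    IsLazy (σ ∘ₗ (fstCoalgHom k C D).toLinearMap) := by
  have hl : (TensorProduct.lid k (C ⊗[k] D)).toLinearMap ∘ₗ
      map (σ ∘ₗ (fstCoalgHom k C D).toLinearMap) LinearMap.id ∘ₗ Coalgebra.comul =
        map ((TensorProduct.lid k C).toLinearMap ∘ₗ map σ LinearMap.id ∘ₗ Coalgebra.comul)
          LinearMap.id := by
    ext a b
    conv_rhs => rw [← Coalgebra.sum_counit_smul (ℛ k b)]
    simp [← (ℛ k a).eq, ← (ℛ k b).eq, sum_tmul, tmul_sum, Finset.smul_sum, smul_tmul', smul_smul,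
      mul_comm]
  have hr : (TensorProduct.rid k (C ⊗[k] D)).toLinearMap ∘ₗ
      map LinearMap.id (σ ∘ₗ (fstCoalgHom k C D).toLinearMap) ∘ₗ Coalgebra.comul =
        map ((TensorProduct.rid k C).toLinearMap ∘ₗ map LinearMap.id σ ∘ₗ Coalgebra.comul)
          LinearMap.id := by
    ext a b
    conv_rhs => rw [← (ℛ k b).sum_counit_right_smul]
    simp [← (ℛ k a).eq, ← (ℛ k b).eq, sum_tmul, tmul_sum, Finset.smul_sum, smul_tmul', smul_smul,
      mul_comm]
  rw [IsLazy, hl, hr, hσ]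

lemma IsLazy.comp_snd {σ : D →ₗ[k] k} (hσ : IsLazy σ) :
    IsLazy (σ ∘ₗ (sndCoalgHom k C D).toLinearMap) := by
  have hl : (TensorProduct.lid k (C ⊗[k] D)).toLinearMap ∘ₗ
      map (σ ∘ₗ (sndCoalgHom k C D).toLinearMap) LinearMap.id ∘ₗ Coalgebra.comul =
        map LinearMap.id
          ((TensorProduct.lid k D).toLinearMap ∘ₗ map σ LinearMap.id ∘ₗ Coalgebra.comul) := by
    ext a b
    conv_rhs => rw [← Coalgebra.sum_counit_smul (ℛ k a)]
    simp [← (ℛ k a).eq, ← (ℛ k b).eq, sum_tmul, tmul_sum, Finset.smul_sum, smul_tmul', smul_smul]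
    exact Finset.sum_comm
  have hr : (TensorProduct.rid k (C ⊗[k] D)).toLinearMap ∘ₗ
      map LinearMap.id (σ ∘ₗ (sndCoalgHom k C D).toLinearMap) ∘ₗ Coalgebra.comul =
        map LinearMap.id
          ((TensorProduct.rid k D).toLinearMap ∘ₗ map LinearMap.id σ ∘ₗ Coalgebra.comul) := by
    ext a b
    conv_rhs => rw [← (ℛ k a).sum_counit_right_smul]
    simp [← (ℛ k a).eq, ← (ℛ k b).eq, sum_tmul, tmul_sum, Finset.smul_sum, smul_tmul', smul_smul]
    exact Finset.sum_comm
  rw [IsLazy, hl, hr, hσ]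

end Lazy

lemma lid_map_comul_eq_rid_map_comul {k : Type u} [Field k] {C : Type u} {M : Type*}
    [AddCommGroup C] [Module k C] [Coalgebra k C] [AddCommGroup M] [Module k M]
    {σ : C →ₗ[k] k} {μ : C →ₗ[k] M}
    (h : ∀ φ : Module.Dual k M, Commute (toConv σ) (toConv (φ ∘ₗ μ))) :
    (TensorProduct.lid k M).toLinearMap ∘ₗ map σ μ ∘ₗ Coalgebra.comul =
      (TensorProduct.rid k M).toLinearMap ∘ₗ map μ σ ∘ₗ Coalgebra.comul := by
  ext c
  refine Module.eval_apply_injective k (LinearMap.ext fun φ => ?_)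
  have := congr(ofConv $(h φ))
  rw [← comp_lid_map_comul, ← comp_rid_map_comul] at this
  exact LinearMap.congr_fun this c

lemma coboundary_cocycle_identity {M : Type*} [Monoid M] (a b c : M) (p q r : Mˣ)
    (ha : ∀ m, Commute a m) :
    a * b * ↑p⁻¹ * (↑p * c * ↑r⁻¹) = b * c * ↑q⁻¹ * (a * ↑q * ↑r⁻¹) := by
  calc a * b * ↑p⁻¹ * (↑p * c * ↑r⁻¹) = a * (b * (c * ↑r⁻¹)) := by
        simp only [mul_assoc, Units.inv_mul_cancel_left]
    _ = b * (c * (a * ↑r⁻¹)) := by rw [(ha b).left_comm, (ha c).left_comm]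
    _ = b * (c * (↑q⁻¹ * (a * (↑q * ↑r⁻¹)))) := by
        rw [← (ha ↑q⁻¹).left_comm, Units.inv_mul_cancel_left]
    _ = _ := by simp only [mul_assoc]

section Coboundary

variable {k : Type u} [CommRing k] {H C : Type u} [Ring H] [Bialgebra k H]
  [AddCommGroup C] [Module k C] [Coalgebra k C]

lemma normalized_D1 {γ γinv : H →ₗ[k] k} (hn : γ 1 = 1)
    (hinv : conv γ γinv = Coalgebra.counit) : Normalized (D1 γ γinv) := by
  intro h
  have := LinearMap.congr_fun hinv h
  constructor
  · simpa [D1, conv, hn, mulH, ← (ℛ k h).eq, Algebra.TensorProduct.one_def, tmul_sum] using this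
  · simpa [D1, conv, hn, mulH, ← (ℛ k h).eq, Algebra.TensorProduct.one_def, sum_tmul] using this

lemma toConv_D1 (γ γinv : H →ₗ[k] k) :
    toConv (D1 γ γinv) = convPrecomp k (fstCoalgHom k H H) (toConv γ) *
      convPrecomp k (sndCoalgHom k H H) (toConv γ) *
        convPrecomp k (Bialgebra.mulCoalgHom k H) (toConv γinv) := by
  rw [D1, conv_eq_ofConv_mul, mul'_comp_map_eq_convMul]
  rfl

lemma toConv_D1_comp (u : (WithConv (H →ₗ[k] k))ˣ) (ψ : C →ₗc[k] H ⊗[k] H) :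
    toConv (D1 (ofConv (u : WithConv (H →ₗ[k] k))) (ofConv ↑u⁻¹) ∘ₗ ψ.toLinearMap) =
      ↑(Units.map (convPrecomp k ((fstCoalgHom k H H).comp ψ)) u) *
        ↑(Units.map (convPrecomp k ((sndCoalgHom k H H).comp ψ)) u) *
          ↑(Units.map (convPrecomp k ((Bialgebra.mulCoalgHom k H).comp ψ)) u)⁻¹ := by
  rw [← convPrecomp_toConv, toConv_D1]
  simp only [toConv_ofConv, map_mul, convPrecomp_comp, Units.coe_map, Units.coe_map_inv]

lemma isUnit_toConv_D1 (u : (WithConv (H →ₗ[k] k))ˣ) :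
    IsUnit (toConv (D1 (ofConv (u : WithConv (H →ₗ[k] k))) (ofConv ↑u⁻¹))) := by
  rw [toConv_D1]
  exact ((u.isUnit.map _).mul (u.isUnit.map _)).mul (u⁻¹.isUnit.map _)

lemma isLeftCocycle_D1 (u : (WithConv (H →ₗ[k] k))ˣ)
    (hu : IsLazy (ofConv (u : WithConv (H →ₗ[k] k)))) :
    IsLeftCocycle (D1 (ofConv (u : WithConv (H →ₗ[k] k))) (ofConv ↑u⁻¹)) := by
  let fst := fstCoalgHom k H H
  let snd := sndCoalgHom k H H
  let mul := Bialgebra.mulCoalgHom k H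
  let fst₃ := fstCoalgHom k H (H ⊗[k] H)
  let snd₃ := sndCoalgHom k H (H ⊗[k] H)
  let idFst := Coalgebra.TensorProduct.map (CoalgHom.id k H) fst
  let idMul := Coalgebra.TensorProduct.map (CoalgHom.id k H) mul
  let mulId := (Coalgebra.TensorProduct.map mul (CoalgHom.id k H)).comp
    (Coalgebra.TensorProduct.assoc k k H H H).symm.toCoalgHom
  let U (x : H ⊗[k] (H ⊗[k] H) →ₗc[k] H) := Units.map (convPrecomp k x) u
  have ext3 {f g : H ⊗[k] (H ⊗[k] H) →ₗc[k] H}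
      (h : ∀ a b c, f (a ⊗ₜ (b ⊗ₜ c)) = g (a ⊗ₜ (b ⊗ₜ c))) : f = g :=
    CoalgHom.coe_linearMap_injective (TensorProduct.ext_threefold' h)
  set σ := D1 (ofConv (u : WithConv (H →ₗ[k] k))) (ofConv ↑u⁻¹) with hσ
  rw [IsLeftCocycle, conv_eq_ofConv_mul, conv_eq_ofConv_mul, ofConv_injective.eq_iff]
  -- the four maps `H ⊗ (H ⊗ H) → H ⊗ H` of the cocycle condition, as coalgebra maps
  change toConv (σ ∘ₗ idFst.toLinearMap) * toConv (σ ∘ₗ mulId.toLinearMap) =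
    toConv (σ ∘ₗ snd₃.toLinearMap) * toConv (σ ∘ₗ idMul.toLinearMap)
  rw [hσ, toConv_D1_comp, toConv_D1_comp, toConv_D1_comp, toConv_D1_comp,
    fstCoalgHom_comp_map_id, fstCoalgHom_comp_map_id, sndCoalgHom_comp_map_id,
    sndCoalgHom_comp_map_id]
  convert coboundary_cocycle_identity (U fst₃ : WithConv (H ⊗[k] (H ⊗[k] H) →ₗ[k] k))
    (U (fst.comp snd₃)) (U (snd.comp snd₃)) (U (mul.comp idFst)) (U (mul.comp snd₃))
    (U (mul.comp idMul)) hu.comp_fst.commute using 4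
  all_goals
    congr 4
    refine ext3 fun a b c => ?_
    simp [fst, snd, mul, snd₃, idFst, idMul, mulId, mul_assoc, smul_smul]

lemma neat2_D1 (u : (WithConv (H →ₗ[k] k))ˣ) (hu : IsLazy (ofConv (u : WithConv (H →ₗ[k] k))))
    (hneat : Neat1 (ofConv (u : WithConv (H →ₗ[k] k)))) :
    Neat2 (D1 (ofConv (u : WithConv (H →ₗ[k] k))) (ofConv ↑u⁻¹)) := by
  let fst := fstCoalgHom k H H
  let mul := Bialgebra.mulCoalgHom k H
  let snd₃ := sndCoalgHom k H (H ⊗[k] H)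
  let idFst := Coalgebra.TensorProduct.map (CoalgHom.id k H) fst
  let U (x : H ⊗[k] (H ⊗[k] H) →ₗc[k] H) := Units.map (convPrecomp k x) u
  have hab_bc : Commute (U (mul.comp idFst) : WithConv (H ⊗[k] (H ⊗[k] H) →ₗ[k] k))
      (U (mul.comp snd₃)) := by
    rwa [Neat1, conv_eq_ofConv_mul, conv_eq_ofConv_mul, ofConv_injective.eq_iff] at hneat
  set σ := D1 (ofConv (u : WithConv (H →ₗ[k] k))) (ofConv ↑u⁻¹) with hσ
  rw [Neat2, conv_eq_ofConv_mul, conv_eq_ofConv_mul, ofConv_injective.eq_iff]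
  change Commute (toConv (σ ∘ₗ idFst.toLinearMap)) (toConv (σ ∘ₗ snd₃.toLinearMap))
  rw [hσ, toConv_D1_comp, toConv_D1_comp, fstCoalgHom_comp_map_id, sndCoalgHom_comp_map_id]
  have ha := (hu.comp_fst (D := H ⊗[k] H)).commute
  have hb := ((hu.comp_fst (D := H)).comp_snd (C := H)).commute
  have hc := ((hu.comp_snd (C := H)).comp_snd (C := H)).commute
  exact ((ha _).mul_left (hb _)).mul_left
    (((hb _).symm.mul_right (hc _).symm).mul_right hab_bc.units_inv_left.units_inv_right)

end Coboundary

lemma isLazy2_D1 {k : Type u} [Field k] {H : Type u} [Ring H] [Bialgebra k H]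
    (u : (WithConv (H →ₗ[k] k))ˣ)
    (hu : IsLazy (ofConv (u : WithConv (H →ₗ[k] k)))) :
    IsLazy2 (D1 (ofConv (u : WithConv (H →ₗ[k] k))) (ofConv ↑u⁻¹)) := by
  refine lid_map_comul_eq_rid_map_comul fun φ => ?_
  rw [toConv_D1]
  exact (((hu.comp_fst (D := H)).commute _).mul_left ((hu.comp_snd (C := H)).commute _)).mul_left
    ((hu.commute (toConv φ)).units_inv_left.map (convPrecomp k (Bialgebra.mulCoalgHom k H)))

/-- If `γ : H → k` is a normalized convolution-invertible neat lazy map on a Hopf algebra,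
then `D¹(γ)` is a neat lazy 2-cocycle: normalized, convolution invertible, lazy, a left
2-cocycle, and neat. -/
theorem stmt18 {k : Type u} [Field k] {H : Type u} [Ring H] [HopfAlgebra k H]
    (γ γinv : H →ₗ[k] k) (hn : γ 1 = 1)
    (hinv1 : conv γ γinv = (Coalgebra.counit : H →ₗ[k] k))
    (hinv2 : conv γinv γ = (Coalgebra.counit : H →ₗ[k] k))
    (hlazy : IsLazy1 γ) (hneat : Neat1 γ) :
    Normalized (D1 γ γinv) ∧
    (∃ τ : H ⊗[k] H →ₗ[k] k, conv (D1 γ γinv) τ = (Coalgebra.counit : H ⊗[k] H →ₗ[k] k) ∧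
      conv τ (D1 γ γinv) = (Coalgebra.counit : H ⊗[k] H →ₗ[k] k)) ∧
    IsLazy2 (D1 γ γinv) ∧ IsLeftCocycle (D1 γ γinv) ∧ Neat2 (D1 γ γinv) := by
  let u : (WithConv (H →ₗ[k] k))ˣ :=
    ⟨toConv γ, toConv γinv, conv_eq_counit_iff.mp hinv1, conv_eq_counit_iff.mp hinv2⟩
  exact ⟨normalized_D1 hn hinv1, isUnit_toConv_iff.mp (isUnit_toConv_D1 u), isLazy2_D1 u hlazy,
    isLeftCocycle_D1 u hlazy, neat2_D1 u hlazy hneat⟩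

end
end
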